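/- arXiv:2010.13969 — 2 statements merged into one kernel-verified Lean document; each statement's English description precedes it below -/
import Mathlib

section
/- Let (G,m,w,B) be a connected weighted finite graph with boundary. Then for every i = 1, 2, …, |B|, the i-th Steklov eigenvalue dominates the i-th Laplacian eigenvalue: σ_i ≥ μ_i. -/
open Finset Real

namespace GraphSteklov

variable {V : Type*} [Fintype V] [DecidableEq V]

/-- The weighted graph Laplacian: `Δu(x) = (1/m_x) Σ_y (u(y)-u(x)) w_{xy}`. -/
noncomputable def lap (m : V → ℝ) (w : V → V → ℝ) (u : V → ℝ) (x : V) : ℝ :=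
  (1 / m x) * ∑ y, (u y - u x) * w x y

/-- Weighted inner product of two functions over a finite set `S` of vertices:
`⟨u,v⟩_S = Σ_{x ∈ S} u(x) v(x) m_x`. -/
def iprodOn (m : V → ℝ) (S : Finset V) (u v : V → ℝ) : ℝ :=
  ∑ x ∈ S, u x * v x * m x

/-- Full weighted inner product `⟨u,v⟩ = Σ_{x ∈ V} u(x) v(x) m_x`. -/
def iprod (m : V → ℝ) (u v : V → ℝ) : ℝ := ∑ x, u x * v x * m x

/-- `(G,m,w)` is a weighted graph: positive vertex measure, symmetric edge weight,
positive exactly on edges. -/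
def IsWeight (G : SimpleGraph V) (m : V → ℝ) (w : V → V → ℝ) : Prop :=
  (∀ x, 0 < m x) ∧ (∀ x y, w x y = w y x) ∧
  (∀ x y, G.Adj x y → 0 < w x y) ∧ (∀ x y, ¬ G.Adj x y → w x y = 0)

/-- `B` is a vertex-boundary of `G`: no two boundary vertices are adjacent, and every
boundary vertex is adjacent to some interior vertex. -/
def IsBoundary (G : SimpleGraph V) (B : Finset V) : Prop :=
  (∀ x ∈ B, ∀ y ∈ B, ¬ G.Adj x y) ∧ (∀ x ∈ B, ∃ y, y ∉ B ∧ G.Adj x y)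

/-- `μ` is the nondecreasing sequence of eigenvalues (with multiplicity) of `-Δ`,
witnessed by an orthonormal (w.r.t. the measure `m`) basis of eigenfunctions. -/
def IsLapSpectrum (m : V → ℝ) (w : V → V → ℝ) (μ : Fin (Fintype.card V) → ℝ) : Prop :=
  Monotone μ ∧ ∃ v : Fin (Fintype.card V) → V → ℝ,
    (∀ i x, - lap m w (v i) x = μ i * v i x) ∧
    (∀ i j, iprod m (v i) (v j) = if i = j then 1 else 0)

/-- `σ` is the nondecreasing sequence of Steklov eigenvalues (with multiplicity) of
the Dirichlet-to-Neumann map of `(G,m,w,B)`: it is witnessed by a family of functions,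
harmonic in the interior, whose restrictions to `B` are orthonormal w.r.t. `⟨·,·⟩_B`
and whose normal derivatives `∂u/∂n = -Δu` on `B` satisfy the eigenvalue equations. -/
def IsSteklovSpectrum (m : V → ℝ) (w : V → V → ℝ) (B : Finset V)
    (σ : Fin B.card → ℝ) : Prop :=
  Monotone σ ∧ ∃ u : Fin B.card → V → ℝ,
    (∀ i y, y ∉ B → lap m w (u i) y = 0) ∧
    (∀ i x, x ∈ B → - lap m w (u i) x = σ i * u i x) ∧
    (∀ i j, iprodOn m B (u i) (u j) = if i = j then 1 else 0)

/-- `Mu2LB m w S c` says that the second smallest Laplacian eigenvalue `μ₂` of the induced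
weighted graph on `S` is `≥ c`, expressed via the variational characterization
`μ₂(S) = min { ⟨du,du⟩_S / ⟨u,u⟩_S : u ≠ 0, ⟨u,1⟩_S = 0 }`. -/
def Mu2LB (m : V → ℝ) (w : V → V → ℝ) (S : Finset V) (c : ℝ) : Prop :=
  ∀ u : V → ℝ, (∑ y ∈ S, u y * m y) = 0 →
    c * (∑ y ∈ S, u y ^ 2 * m y) ≤ (1 / 2) * ∑ x ∈ S, ∑ y ∈ S, (u y - u x) ^ 2 * w x y

/-- The carré du champ operator `Γ(f,g) = ½(Δ(fg) - fΔg - gΔf)`. -/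
noncomputable def gammaOp (m : V → ℝ) (w : V → V → ℝ) (f g : V → ℝ) (x : V) : ℝ :=
  (lap m w (f * g) x - f x * lap m w g x - g x * lap m w f x) / 2

/-- The iterated carré du champ operator `Γ₂(f,f) = ½ΔΓ(f,f) - Γ(f,Δf)`. -/
noncomputable def gamma2Op (m : V → ℝ) (w : V → V → ℝ) (f : V → ℝ) (x : V) : ℝ :=
  (lap m w (gammaOp m w f f) x) / 2 - gammaOp m w f (lap m w f) x

/-- Edge connectivity: the least number of edges whose deletion disconnects `G`. -/
noncomputable def edgeConn (G : SimpleGraph V) : ℕ :=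
  sInf {n | ∃ F : Finset (Sym2 V), ↑F ⊆ G.edgeSet ∧ F.card = n ∧
    ¬ (G.deleteEdges ↑F).Connected}

/-- Vertex connectivity: the least number of vertices whose deletion disconnects `G`
(with the convention `v(K_n) = n - 1`, realized by allowing deletions leaving at most
one vertex). -/
noncomputable def vertConn (G : SimpleGraph V) : ℕ :=
  sInf {n | ∃ S : Finset V, S.card = n ∧
    (¬ (G.induce (↑(Sᶜ : Finset V) : Set V)).Connected ∨ (Sᶜ : Finset V).card ≤ 1)}

/-- Edge weights of the weighted path on `Fin n` (vertices `0,…,n-1`), where all edges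
have weight `1` except the edge incident to the vertex `0`, which has weight `lam`. -/
def pathW (lam : ℝ) {n : ℕ} (a b : Fin n) : ℝ :=
  if a.val + 1 = b.val ∨ b.val + 1 = a.val then
    (if a.val = 0 ∨ b.val = 0 then lam else 1) else 0

/-- The Laplacian (with unit vertex measure) of the weighted path `pathW lam`. -/
noncomputable def pathLap (lam : ℝ) {n : ℕ} (u : Fin n → ℝ) (a : Fin n) : ℝ :=
  ∑ b, (u b - u a) * pathW lam a b

/-- The largest Laplacian eigenvalue of the path `P_i` on `i` vertices with unit weight. -/
noncomputable def pathTopEig (i : ℕ) : ℝ :=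
  sSup {r | ∃ u : Fin i → ℝ, u ≠ 0 ∧ ∀ a, - pathLap 1 u a = r * u a}

/-- `𝒫(k,λ)`: the first Dirichlet eigenvalue of the path with vertices `0,1,…,k`, unit
vertex measure, edge weights `w_{01} = λ` and `w_{j,j+1} = 1` for `j ≥ 1`, and boundary
vertex `0`: the smallest eigenvalue of `-Δ` on functions vanishing at `0`. -/
noncomputable def pathDirichlet (k : ℕ) (lam : ℝ) : ℝ :=
  sInf {r | ∃ u : Fin (k + 1) → ℝ, u ≠ 0 ∧ u 0 = 0 ∧
    ∀ a : Fin (k + 1), a.val ≠ 0 → - pathLap lam u a = r * u a}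

lemma iprod_comm (m : V → ℝ) (u v : V → ℝ) : iprod m u v = iprod m v u :=
  Finset.sum_congr rfl fun x _ => by ring

lemma iprod_lap (m : V → ℝ) (w : V → V → ℝ) (hm : ∀ x, m x ≠ 0) (u v : V → ℝ) :
    iprod m (lap m w u) v = ∑ x, ∑ y, (u y - u x) * w x y * v x := by
  unfold iprod lap
  refine Finset.sum_congr rfl fun x _ => ?_
  rw [Finset.mul_sum, Finset.sum_mul, Finset.sum_mul]
  refine Finset.sum_congr rfl fun y _ => ?_
  field_simp [hm x]

lemma energy_eq (m : V → ℝ) (w : V → V → ℝ) (hw : ∀ x y, w x y = w y x) (u v : V → ℝ) :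
    ∑ x, ∑ y, (u y - u x) * w x y * v x
      = -(1/2) * ∑ x, ∑ y, (u y - u x) * (v y - v x) * w x y := by
  have h1 : ∑ x, ∑ y, (u y - u x) * w x y * v x
      = ∑ x, ∑ y, (u x - u y) * w x y * v y := by
    rw [Finset.sum_comm]
    exact Finset.sum_congr rfl fun x _ => Finset.sum_congr rfl fun y _ => by rw [hw y x]
  have h2 : (∑ x, ∑ y, (u y - u x) * w x y * v x)
      + ((∑ x, ∑ y, (u x - u y) * w x y * v y)
        + (∑ x, ∑ y, (u y - u x) * (v y - v x) * w x y)) = 0 := by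
    rw [← Finset.sum_add_distrib, ← Finset.sum_add_distrib]
    refine Finset.sum_eq_zero fun x _ => ?_
    rw [← Finset.sum_add_distrib, ← Finset.sum_add_distrib]
    exact Finset.sum_eq_zero fun y _ => by ring
  linarith [h1, h2]

lemma lap_selfadj (m : V → ℝ) (w : V → V → ℝ) (hm : ∀ x, m x ≠ 0)
    (hw : ∀ x y, w x y = w y x) (u v : V → ℝ) :
    iprod m (lap m w u) v = iprod m u (lap m w v) := by
  rw [iprod_lap m w hm, iprod_comm, iprod_lap m w hm, energy_eq m w hw, energy_eq m w hw]
  congr 1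
  exact Finset.sum_congr rfl fun x _ => Finset.sum_congr rfl fun y _ => by ring

lemma lap_energy_nonpos (m : V → ℝ) (w : V → V → ℝ) (hm : ∀ x, m x ≠ 0)
    (hw : ∀ x y, w x y = w y x) (hw0 : ∀ x y, 0 ≤ w x y) (u : V → ℝ) :
    iprod m (lap m w u) u ≤ 0 := by
  rw [iprod_lap m w hm, energy_eq m w hw]
  have : 0 ≤ ∑ x, ∑ y, (u y - u x) * (u y - u x) * w x y :=
    Finset.sum_nonneg fun x _ => Finset.sum_nonneg fun y _ =>
      mul_nonneg (mul_self_nonneg _) (hw0 x y)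
  linarith

lemma lap_combo {ι : Type*} (m : V → ℝ) (w : V → V → ℝ) (s : Finset ι) (c : ι → ℝ)
    (f : ι → V → ℝ) (x : V) :
    lap m w (fun y => ∑ j ∈ s, c j * f j y) x = ∑ j ∈ s, c j * lap m w (f j) x := by
  unfold lap
  have h : ∀ y, ((∑ j ∈ s, c j * f j y) - ∑ j ∈ s, c j * f j x) * w x y
      = ∑ j ∈ s, c j * ((f j y - f j x) * w x y) := by
    intro y
    rw [← Finset.sum_sub_distrib, Finset.sum_mul]
    exact Finset.sum_congr rfl fun j _ => by ring
  simp only [h]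
  rw [Finset.sum_comm, Finset.mul_sum]
  refine Finset.sum_congr rfl fun j _ => ?_
  rw [Finset.mul_sum, Finset.mul_sum, Finset.mul_sum]
  exact Finset.sum_congr rfl fun y _ => by ring

lemma iprod_sum_left {ι : Type*} (m : V → ℝ) (s : Finset ι) (c : ι → ℝ)
    (f : ι → V → ℝ) (g : V → ℝ) :
    iprod m (fun x => ∑ j ∈ s, c j * f j x) g = ∑ j ∈ s, c j * iprod m (f j) g := by
  unfold iprod
  simp only [Finset.sum_mul]
  rw [Finset.sum_comm]
  refine Finset.sum_congr rfl fun j _ => ?_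
  rw [Finset.mul_sum]
  refine Finset.sum_congr rfl fun x _ => by ring

lemma sum_combo {ι : Type*} (m : V → ℝ) (S : Finset V) (s : Finset ι) (c d : ι → ℝ)
    (f g : ι → V → ℝ) :
    ∑ x ∈ S, (∑ j ∈ s, c j * f j x) * (∑ l ∈ s, d l * g l x) * m x
      = ∑ j ∈ s, ∑ l ∈ s, c j * d l * (∑ x ∈ S, f j x * g l x * m x) := by
  have h : ∀ x, (∑ j ∈ s, c j * f j x) * (∑ l ∈ s, d l * g l x) * m x
      = ∑ j ∈ s, ∑ l ∈ s, c j * d l * (f j x * g l x * m x) := by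
    intro x
    rw [Finset.sum_mul_sum, Finset.sum_mul]
    refine Finset.sum_congr rfl fun j _ => ?_
    rw [Finset.sum_mul]
    exact Finset.sum_congr rfl fun l _ => by ring
  simp only [h]
  rw [Finset.sum_comm]
  refine Finset.sum_congr rfl fun j _ => ?_
  rw [Finset.sum_comm]
  refine Finset.sum_congr rfl fun l _ => ?_
  rw [Finset.mul_sum]


/-- On a connected weighted finite graph with boundary, the `i`-th Steklov
eigenvalue dominates the `i`-th Laplacian eigenvalue: `σ_i ≥ μ_i` for `i = 1,…,|B|`. -/
theorem steklov_ge_laplacian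
    {V : Type*} [Fintype V] [DecidableEq V]
    (G : SimpleGraph V) (m : V → ℝ) (w : V → V → ℝ) (B : Finset V)
    (hG : G.Connected) (hW : IsWeight G m w) (hB : IsBoundary G B)
    (μ : Fin (Fintype.card V) → ℝ) (hμ : IsLapSpectrum m w μ)
    (σ : Fin B.card → ℝ) (hσ : IsSteklovSpectrum m w B σ) :
    ∀ i : Fin B.card, μ (Fin.castLE (Finset.card_le_univ B) i) ≤ σ i := by
  obtain ⟨hm, hwsym, hwadj, hwnadj⟩ := hW
  have hm' : ∀ x, m x ≠ 0 := fun x => (hm x).ne'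
  have hw0 : ∀ x y, 0 ≤ w x y := fun x y => by
    by_cases h : G.Adj x y
    · exact (hwadj x y h).le
    · exact (hwnadj x y h).ge
  obtain ⟨hμmono, v, hveig, hvon⟩ := hμ
  obtain ⟨hσmono, U, hUharm, hUeig, hUon⟩ := hσ
  intro i
  set i' : Fin (Fintype.card V) := Fin.castLE (Finset.card_le_univ B) i with hi'
  -- σ i is nonnegative
  have hσnonneg : 0 ≤ σ i := by
    have h1 : iprod m (lap m w (U i)) (U i) ≤ 0 := lap_energy_nonpos m w hm' hwsym hw0 (U i)
    have hsplit : iprod m (lap m w (U i)) (U i) = ∑ x ∈ B, lap m w (U i) x * U i x * m x :=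
      (Finset.sum_subset B.subset_univ fun x _ hx => by rw [hUharm i x hx]; ring).symm
    have h2 : iprod m (lap m w (U i)) (U i) = -σ i := by
      rw [hsplit]
      have h3 : ∀ x ∈ B, lap m w (U i) x * U i x * m x = -(σ i * (U i x * U i x * m x)) := by
        intro x hx
        have h4 := hUeig i x hx
        have h5 : lap m w (U i) x = -(σ i * U i x) := by linarith
        rw [h5]; ring
      rw [Finset.sum_congr rfl h3, Finset.sum_neg_distrib, ← Finset.mul_sum]
      have h6 := hUon i i
      simp only [if_pos rfl, eq_self_iff_true, if_true] at h6
      rw [show (∑ x ∈ B, U i x * U i x * m x) = iprodOn m B (U i) (U i) from rfl, h6, mul_one]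
    linarith
  -- pick a combination of the first (i+1) Steklov functions orthogonal to v_0,…,v_{i-1}
  have hkB : (i : ℕ) + 1 ≤ B.card := i.isLt
  have hBn : B.card ≤ Fintype.card V := Finset.card_le_univ B
  have hin : (i : ℕ) ≤ Fintype.card V := le_trans (Nat.le_of_lt i.isLt) hBn
  set emb : Fin ((i : ℕ) + 1) → Fin B.card := Fin.castLE hkB with hemb
  set M : Matrix (Fin (i : ℕ)) (Fin ((i : ℕ) + 1)) ℝ :=
    Matrix.of fun l j => iprod m (U (emb j)) (v (Fin.castLE hin l)) with hM
  obtain ⟨c, hc0, hcker⟩ : ∃ c : Fin ((i : ℕ) + 1) → ℝ, c ≠ 0 ∧ M.mulVec c = 0 := by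
    have hni : ¬ Function.Injective M.mulVecLin := by
      intro h
      have h1 := LinearMap.finrank_le_finrank_of_injective h
      simp only [Module.finrank_fintype_fun_eq_card, Fintype.card_fin] at h1
      omega
    obtain ⟨a, b, hab, hne⟩ := Function.not_injective_iff.mp hni
    refine ⟨a - b, sub_ne_zero.mpr hne, ?_⟩
    have h2 : M.mulVecLin (a - b) = 0 := by rw [map_sub, hab, sub_self]
    simpa [Matrix.mulVecLin_apply] using h2
  set u : V → ℝ := fun x => ∑ j, c j * U (emb j) x with hu
  -- orthogonality to the low Laplace eigenfunctions
  have horth : ∀ l : Fin (Fintype.card V), l < i' → iprod m u (v l) = 0 := by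
    intro l hl
    have hlk : (l : ℕ) < (i : ℕ) := hl
    have h1 : iprod m u (v l) = ∑ j, c j * iprod m (U (emb j)) (v l) :=
      iprod_sum_left m Finset.univ c (fun j => U (emb j)) (v l)
    have h2 : ∑ j, M ⟨(l : ℕ), hlk⟩ j * c j = 0 := by
      have h3 := congrFun hcker ⟨(l : ℕ), hlk⟩
      simpa [Matrix.mulVec, dotProduct] using h3
    rw [h1, ← h2]
    refine Finset.sum_congr rfl fun j _ => ?_
    have hvv : v (Fin.castLE hin ⟨(l : ℕ), hlk⟩) = v l := rfl
    rw [hM]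
    simp only [Matrix.of_apply]
    rw [hvv]
    ring
  -- orthonormality sums over B
  have hUo : ∀ j l : Fin ((i : ℕ) + 1),
      (∑ x ∈ B, U (emb j) x * U (emb l) x * m x) = if j = l then 1 else 0 := by
    intro j l
    have h := hUon (emb j) (emb l)
    rw [show iprodOn m B (U (emb j)) (U (emb l))
        = ∑ x ∈ B, U (emb j) x * U (emb l) x * m x from rfl] at h
    rw [h]
    congr 1
    simp only [hemb, eq_iff_iff]
    constructor
    · intro hh; exact Fin.castLE_injective hkB hh
    · intro hh; rw [hh]
  have hSB : ∑ x ∈ B, u x * u x * m x = ∑ j, c j ^ 2 := by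
    simp only [hu]
    rw [sum_combo]
    simp only [hUo, mul_ite, mul_one, mul_zero, Finset.sum_ite_eq, Finset.mem_univ, if_true]
    exact Finset.sum_congr rfl fun j _ => by rw [pow_two]
  -- Laplacian of u
  have hlapu : ∀ x, lap m w u x = ∑ j, c j * lap m w (U (emb j)) x := by
    intro x
    simp only [hu]
    exact lap_combo m w Finset.univ c (fun j => U (emb j)) x
  have hharm : ∀ x, x ∉ B → lap m w u x = 0 := by
    intro x hx
    rw [hlapu]
    exact Finset.sum_eq_zero fun j _ => by rw [hUharm (emb j) x hx, mul_zero]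
  have hlapB : ∀ x ∈ B, lap m w u x = -(∑ j, (c j * σ (emb j)) * U (emb j) x) := by
    intro x hx
    rw [hlapu, ← Finset.sum_neg_distrib]
    refine Finset.sum_congr rfl fun j _ => ?_
    have h1 := hUeig (emb j) x hx
    have h2 : lap m w (U (emb j)) x = -(σ (emb j) * U (emb j) x) := by linarith
    rw [h2]; ring
  -- the Dirichlet energy of u
  have hp : iprod m (lap m w u) u = -(∑ j, σ (emb j) * c j ^ 2) := by
    have hsplit : iprod m (lap m w u) u = ∑ x ∈ B, lap m w u x * u x * m x :=
      (Finset.sum_subset B.subset_univ fun x _ hx => by rw [hharm x hx]; ring).symm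
    rw [hsplit]
    have h1 : ∀ x ∈ B, lap m w u x * u x * m x
        = -((∑ j, (c j * σ (emb j)) * U (emb j) x) * u x * m x) := by
      intro x hx; rw [hlapB x hx]; ring
    rw [Finset.sum_congr rfl h1, Finset.sum_neg_distrib]
    congr 1
    simp only [hu]
    rw [sum_combo]
    simp only [hUo, mul_ite, mul_one, mul_zero, Finset.sum_ite_eq, Finset.mem_univ, if_true]
    exact Finset.sum_congr rfl fun j _ => by rw [pow_two]; ring
  -- the Laplace eigenfunctions form a basis
  have hvli : LinearIndependent ℝ v := by
    rw [linearIndependent_iff']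
    intro s g hg t ht
    have h0 : iprod m (fun x => ∑ j ∈ s, g j * v j x) (v t) = 0 := by
      have he : (fun x => ∑ j ∈ s, g j * v j x) = (∑ j ∈ s, g j • v j) := by
        funext x
        rw [Finset.sum_apply]
        exact Finset.sum_congr rfl fun j _ => rfl
      rw [he, hg]
      simp [iprod]
    rw [iprod_sum_left] at h0
    simpa [hvon, mul_ite, mul_one, mul_zero, Finset.sum_ite_eq', ht] using h0
  have hfr : Fintype.card (Fin (Fintype.card V)) = Module.finrank ℝ (V → ℝ) := by
    simp [Module.finrank_fintype_fun_eq_card]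
  haveI : Nonempty (Fin (Fintype.card V)) := ⟨i'⟩
  let bas := basisOfLinearIndependentOfCardEqFinrank hvli hfr
  have hbas : ⇑bas = v := coe_basisOfLinearIndependentOfCardEqFinrank hvli hfr
  set d : Fin (Fintype.card V) → ℝ := fun l => bas.repr u l with hd
  have hrepr : u = fun x => ∑ l, d l * v l x := by
    have hs := bas.sum_repr u
    funext x
    conv_lhs => rw [← hs]
    rw [Finset.sum_apply]
    refine Finset.sum_congr rfl fun l _ => ?_
    simp [hbas, hd]
  have expand : ∀ g : V → ℝ, iprod m u g = ∑ l, d l * iprod m (v l) g := by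
    intro g
    conv_lhs => rw [hrepr]
    exact iprod_sum_left m Finset.univ d v g
  have hdl : ∀ l, iprod m u (v l) = d l := by
    intro l
    rw [expand (v l)]
    simp [hvon, mul_ite, mul_one, mul_zero, Finset.sum_ite_eq']
  have hN : iprod m u u = ∑ l, d l ^ 2 := by
    rw [iprod_comm, expand u]
    refine Finset.sum_congr rfl fun l _ => ?_
    rw [iprod_comm, hdl l, pow_two]
  -- lower bound for the energy
  have hlow : μ i' * iprod m u u ≤ - iprod m (lap m w u) u := by
    have h1 : iprod m (lap m w u) u = ∑ l, d l * (-(μ l * d l)) := by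
      rw [iprod_comm, expand (lap m w u)]
      refine Finset.sum_congr rfl fun l _ => ?_
      congr 1
      rw [iprod_comm, lap_selfadj m w hm' hwsym]
      have hl : ∀ x, lap m w (v l) x = -(μ l * v l x) := by
        intro x; have := hveig l x; linarith
      calc iprod m u (lap m w (v l)) = ∑ x, u x * (-(μ l * v l x)) * m x :=
            Finset.sum_congr rfl fun x _ => by rw [hl x]
        _ = -(μ l * ∑ x, u x * v l x * m x) := by
            rw [Finset.mul_sum, ← Finset.sum_neg_distrib]
            exact Finset.sum_congr rfl fun x _ => by ring
        _ = -(μ l * d l) := by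
            rw [show (∑ x, u x * v l x * m x) = iprod m u (v l) from rfl, hdl l]
    rw [h1, hN]
    have h2 : - (∑ l, d l * (-(μ l * d l))) = ∑ l, μ l * d l ^ 2 := by
      rw [← Finset.sum_neg_distrib]
      exact Finset.sum_congr rfl fun l _ => by ring
    rw [h2, Finset.mul_sum]
    refine Finset.sum_le_sum fun l _ => ?_
    by_cases hlt : l < i'
    · have hz : d l = 0 := by rw [← hdl l]; exact horth l hlt
      rw [hz]; ring_nf; exact le_refl _
    · have hle : μ i' ≤ μ l := hμmono (le_of_not_gt hlt)
      nlinarith [sq_nonneg (d l)]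
  -- upper bound for the energy
  have hup : - iprod m (lap m w u) u ≤ σ i * ∑ j, c j ^ 2 := by
    rw [hp, neg_neg, Finset.mul_sum]
    refine Finset.sum_le_sum fun j _ => ?_
    have hle : σ (emb j) ≤ σ i := by
      refine hσmono ?_
      rw [Fin.le_def]
      simpa [hemb] using Nat.lt_succ_iff.mp j.isLt
    nlinarith [sq_nonneg (c j)]
  have hSBpos : 0 < ∑ j, c j ^ 2 := by
    obtain ⟨j, hj⟩ := Function.ne_iff.mp hc0
    refine Finset.sum_pos' (fun j _ => sq_nonneg _) ⟨j, Finset.mem_univ j, ?_⟩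
    have h1 : c j ^ 2 ≠ 0 := pow_ne_zero 2 (by simpa using hj)
    exact lt_of_le_of_ne (sq_nonneg _) (Ne.symm h1)
  have hBle : ∑ j, c j ^ 2 ≤ iprod m u u := by
    rw [← hSB]
    exact Finset.sum_le_sum_of_subset_of_nonneg B.subset_univ
      fun x _ _ => mul_nonneg (mul_self_nonneg _) (hm x).le
  have hNpos : 0 < iprod m u u := lt_of_lt_of_le hSBpos hBle
  have hfin : μ i' * iprod m u u ≤ σ i * iprod m u u :=
    le_trans hlow (le_trans hup (mul_le_mul_of_nonneg_left hBle hσnonneg))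
  exact le_of_mul_le_mul_right hfin hNpos

end GraphSteklov
end

section
/- Let (G,m,w,B) be a connected weighted finite graph with boundary. Suppose there is a nonnegative function ρ : Ω → ℝ with w_{xy} = ρ_y m_x m_y for every x ∈ B and y ∈ Ω, and suppose μ₂(Ω) ≥ Deg − V_B·ρ_min + (V_G/Deg)·⟨ρ,ρ⟩_Ω, where μ₂(Ω) is the second smallest Laplacian eigenvalue of the induced weighted graph G|_Ω (with measure m and weight w restricted to Ω), Deg := ⟨ρ,1⟩_Ω, ρ_min = min_{y∈Ω} ρ_y, V_B = Σ_{x∈B} m_x, V_Ω = Σ_{y∈Ω} m_y, V_G = V_B + V_Ω. Then σ_i = μ_i for all i = 1, 2, …, |B|. -/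
/-!
For `x ∈ B` the product form of the weights gives `-Δu(x) = Deg · u(x) - ⟨u, ρ⟩_Ω`, so an
eigenfunction of `Λ` or of `-Δ` whose eigenvalue differs from `Deg` is constant on `B`. Two
orthonormal functions cannot both be constant on `B`, so at most one `σ_i` differs from `Deg`,
and since `σ_1 = 0` the Steklov spectrum is `0, Deg, …, Deg`. Extending the Steklov eigenfunctions of `Deg` by zero gives `|B| - 1`
orthonormal eigenfunctions of `-Δ` for `Deg`, whence `μ_i ≤ Deg` for `2 ≤ i ≤ |B|`. Conversely, a
Laplacian eigenfunction with eigenvalue outside `{0, Deg}` is constant on `B` and orthogonal to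
the constants; splitting its energy into the boundary edges and the edges of `Ω` and bounding the
latter by `μ₂(Ω)`, Cauchy–Schwarz shows that its Rayleigh quotient is at least `Deg`.
-/

open Finset Real

theorem sum_sq_mul_eq_of_sum_mul_eq {ι : Type*} {S : Finset ι} {v m : ι → ℝ} {c : ℝ}
    (hc : ∑ y ∈ S, v y * m y = c * ∑ y ∈ S, m y) :
    ∑ y ∈ S, v y ^ 2 * m y = ∑ y ∈ S, (v y - c) ^ 2 * m y + c ^ 2 * ∑ y ∈ S, m y := by
  have h : ∑ y ∈ S, (v y - c) ^ 2 * m y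
      = ∑ y ∈ S, v y ^ 2 * m y - 2 * c * ∑ y ∈ S, v y * m y + c ^ 2 * ∑ y ∈ S, m y := by
    simp only [mul_sum, ← sum_sub_distrib, ← sum_add_distrib]
    exact sum_congr rfl fun y _ => by ring
  rw [h, hc]
  ring

theorem neg_two_mul_le_of_sq_le_mul {a c p q r : ℝ} (ha : 0 < a) (hp : p ^ 2 ≤ q * r) :
    -(2 * c * p) ≤ a * c ^ 2 + q * r / a := by
  have hsq : a * c ^ 2 + p ^ 2 / a + 2 * c * p = (a * c + p) ^ 2 / a := by
    field_simp
    ring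
  have := div_le_div_of_nonneg_right hp ha.le
  have := div_nonneg (sq_nonneg (a * c + p)) ha.le
  linarith

theorem Monotone.le_of_lt_card_filter_le {α : Type*} [LinearOrder α] {n : ℕ} {μ : Fin n → α}
    (hμ : Monotone μ) {c : α} {k : Fin n} (hk : k.val < #{j | μ j ≤ c}) : μ k ≤ c := by
  by_contra h
  have hsub : ({j | μ j ≤ c} : Finset (Fin n)) ⊆ Iio k := fun j hj => by
    simp only [mem_filter, mem_univ, true_and] at hj
    exact mem_Iio.2 (lt_of_not_ge fun hkj => h ((hμ hkj).trans hj))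
  have := card_le_card hsub
  rw [Fin.card_Iio] at this
  omega

namespace GraphSteklov

variable {V : Type*} {m : V → ℝ} {w : V → V → ℝ}

theorem IsWeight.weight_nonneg {G : SimpleGraph V} (hW : IsWeight G m w) (x y : V) : 0 ≤ w x y := by
  by_cases h : G.Adj x y
  · exact (hW.2.2.1 x y h).le
  · exact (hW.2.2.2 x y h).ge

theorem IsBoundary.weight_eq_zero {G : SimpleGraph V} {B : Finset V} (hB : IsBoundary G B)
    (hW : IsWeight G m w) : ∀ x ∈ B, ∀ y ∈ B, w x y = 0 :=
  fun x hx y hy => hW.2.2.2 x y (hB.1 x hx y hy)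

noncomputable def toL2 (m : V → ℝ) (S : Finset V) (f : V → ℝ) : EuclideanSpace ℝ S :=
  WithLp.toLp 2 fun x => f x * √(m x)

theorem inner_toL2 {S : Finset V} (hm : ∀ x ∈ S, 0 ≤ m x) (f g : V → ℝ) :
    inner ℝ (toL2 m S f) (toL2 m S g) = iprodOn m S f g := by
  rw [PiLp.inner_apply, iprodOn, ← sum_coe_sort S]
  refine sum_congr rfl fun x _ => ?_
  simp only [toL2, RCLike.inner_apply, conj_trivial]
  rw [mul_mul_mul_comm, Real.mul_self_sqrt (hm x x.2)]
  ring

theorem card_le_card_of_pairwise_iprodOn_eq_zero {S : Finset V} (hm : ∀ x ∈ S, 0 ≤ m x)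
    {ι : Type*} [Fintype ι] {f : ι → V → ℝ}
    (horth : Pairwise fun i j => iprodOn m S (f i) (f j) = 0)
    (hf : ∀ i, iprodOn m S (f i) (f i) ≠ 0) : Fintype.card ι ≤ S.card := by
  have hli : LinearIndependent ℝ fun i => toL2 m S (f i) := by
    refine linearIndependent_of_ne_zero_of_inner_eq_zero (fun i => ?_) fun i j hij => ?_
    · rw [← inner_self_ne_zero (𝕜 := ℝ), inner_toL2 hm]
      exact hf i
    · change inner ℝ _ _ = 0
      rw [inner_toL2 hm]
      exact horth hij
  simpa using hli.fintype_card_le_finrank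

theorem card_le_card_filter_of_orthonormal {S : Finset V} (hm : ∀ x ∈ S, 0 ≤ m x)
    {κ ι : Type*} [Fintype κ] [DecidableEq κ] [Fintype ι] {e : κ → V → ℝ}
    (he : ∀ k k', iprodOn m S (e k) (e k') = if k = k' then 1 else 0)
    (hκ : Fintype.card κ = S.card) (μ : κ → ℝ) (c : ℝ) {g : ι → V → ℝ}
    (hg : Pairwise fun i j => iprodOn m S (g i) (g j) = 0)
    (hg0 : ∀ i, iprodOn m S (g i) (g i) ≠ 0)
    (hge : ∀ i k, μ k ≠ c → iprodOn m S (g i) (e k) = 0) :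
    Fintype.card ι ≤ #{k | μ k = c} := by
  have hcomm : ∀ u v, iprodOn m S u v = iprodOn m S v u := fun u v =>
    sum_congr rfl fun x _ => by ring
  have hcard := card_le_card_of_pairwise_iprodOn_eq_zero hm
    (f := Sum.elim g fun k : {k // μ k ≠ c} => e k) ?_ ?_
  · have hsplit := card_filter_add_card_filter_not (s := univ) (fun k => μ k = c)
    rw [card_univ, hκ] at hsplit
    simp only [Fintype.card_sum, Fintype.card_subtype, ne_eq] at hcard
    omega
  · rintro (i | ⟨k, hk⟩) (j | ⟨k', hk'⟩) hne
    · exact hg fun h => hne (congrArg _ h)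
    · exact hge i k' hk'
    · exact (hcomm _ _).trans (hge j k hk)
    · simp only [Sum.elim_inr]
      rw [he, if_neg fun h => hne (by subst h; rfl)]
  · rintro (i | ⟨k, hk⟩)
    · exact hg0 i
    · simp [he]

theorem eq_of_orthonormal_of_const {S : Finset V} {κ : Type*} [DecidableEq κ]
    {e : κ → V → ℝ} (he : ∀ k k', iprodOn m S (e k) (e k') = if k = k' then 1 else 0)
    {k k' : κ} {s s' : ℝ} (hk : ∀ x ∈ S, e k x = s) (hk' : ∀ x ∈ S, e k' x = s') : k = k' := by
  have hconst : ∀ {j j' t t'}, (∀ x ∈ S, e j x = t) → (∀ x ∈ S, e j' x = t') →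
      iprodOn m S (e j) (e j') = t * t' * ∑ x ∈ S, m x := fun hj hj' => by
    rw [iprodOn, mul_sum]
    exact sum_congr rfl fun x hx => by rw [hj x hx, hj' x hx]
  by_contra hne
  have h0 := he k k'
  have h1 := he k k
  have h2 := he k' k'
  rw [hconst hk hk', if_neg hne] at h0
  rw [hconst hk hk, if_pos rfl] at h1
  rw [hconst hk' hk', if_pos rfl] at h2
  have : (s * s' * ∑ x ∈ S, m x) ^ 2 = (s * s * ∑ x ∈ S, m x) * (s' * s' * ∑ x ∈ S, m x) := by
    ring
  rw [h0, h1, h2] at this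
  norm_num at this

variable [Fintype V]

theorem neg_lap_mul_eq_sum {x : V} (hm : m x ≠ 0) (u : V → ℝ) :
    -lap m w u x * m x = ∑ y, (u x - u y) * w x y := by
  rw [lap, neg_mul, mul_comm, ← mul_assoc, mul_one_div_cancel hm, one_mul,
    ← sum_neg_distrib]
  exact sum_congr rfl fun y _ => by ring

theorem lap_const (c : ℝ) (x : V) : lap m w (fun _ => c) x = 0 := by
  simp [lap]

theorem sum_neg_lap_mul (hm : ∀ x, m x ≠ 0) (hw : ∀ x y, w x y = w y x) (u g : V → ℝ) :
    ∑ x, -lap m w u x * g x * m x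
      = (1 / 2) * ∑ x, ∑ y, (u y - u x) * (g y - g x) * w x y := by
  have hswap : ∑ x, ∑ y, (u y - u x) * g y * w x y = ∑ x, ∑ y, (u x - u y) * g x * w x y := by
    rw [sum_comm]
    simp_rw [hw]
  calc ∑ x, -lap m w u x * g x * m x = ∑ x, ∑ y, (u x - u y) * g x * w x y := by
        refine sum_congr rfl fun x _ => ?_
        rw [mul_right_comm, neg_lap_mul_eq_sum (hm x), sum_mul]
        exact sum_congr rfl fun y _ => by ring
    _ = (1 / 2) * ∑ x, ∑ y, ((u x - u y) * g x * w x y + (u y - u x) * g y * w x y) := by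
        simp_rw [sum_add_distrib, hswap]
        ring
    _ = (1 / 2) * ∑ x, ∑ y, (u y - u x) * (g y - g x) * w x y := by
        congr 1
        exact sum_congr rfl fun x _ => sum_congr rfl fun y _ => by ring

theorem sum_neg_lap_mul_comm (hm : ∀ x, m x ≠ 0) (hw : ∀ x y, w x y = w y x) (u g : V → ℝ) :
    ∑ x, -lap m w u x * g x * m x = ∑ x, -lap m w g x * u x * m x := by
  simp_rw [sum_neg_lap_mul hm hw]
  congr 1
  exact sum_congr rfl fun x _ => sum_congr rfl fun y _ => by ring

theorem energy_eq_of_neg_lap_eq (hm : ∀ x, m x ≠ 0) (hw : ∀ x y, w x y = w y x) {u : V → ℝ}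
    {c : ℝ} (hu : ∀ x, -lap m w u x = c * u x) :
    (1 / 2) * ∑ x, ∑ y, (u y - u x) ^ 2 * w x y = c * iprod m u u := by
  calc (1 / 2) * ∑ x, ∑ y, (u y - u x) ^ 2 * w x y = ∑ x, -lap m w u x * u x * m x := by
        simp only [sum_neg_lap_mul hm hw, sq]
    _ = c * iprod m u u := by
        rw [iprod, mul_sum]
        exact sum_congr rfl fun x _ => by rw [hu]; ring

theorem IsWeight.eq_of_energy_eq_zero {G : SimpleGraph V} (hW : IsWeight G m w)
    (hG : G.Connected) {u : V → ℝ} (hE : ∑ x, ∑ y, (u y - u x) ^ 2 * w x y = 0) (x y : V) :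
    u x = u y := by
  have hnn : ∀ x y, 0 ≤ (u y - u x) ^ 2 * w x y := fun x y =>
    mul_nonneg (sq_nonneg _) (hW.weight_nonneg x y)
  have hterm : ∀ x y, (u y - u x) ^ 2 * w x y = 0 := fun x y => by
    rw [sum_eq_zero_iff_of_nonneg fun x _ => sum_nonneg fun y _ => hnn x y] at hE
    exact (sum_eq_zero_iff_of_nonneg fun y _ => hnn x y).1 (hE x (mem_univ _)) y
      (mem_univ _)
  have hadj : ∀ x y, G.Adj x y → u x = u y := fun x y h => by
    have := hterm x y
    rw [mul_eq_zero, sq_eq_zero_iff, sub_eq_zero] at this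
    exact (this.resolve_right (hW.2.2.1 x y h).ne').symm
  obtain ⟨p⟩ := hG.preconnected x y
  induction p with
  | nil => rfl
  | cons h _ ih => exact (hadj _ _ h).trans ih

/-- Self-adjointness of the Dirichlet-to-Neumann map of `S`; for `S = univ`, of the Laplacian. -/
theorem iprodOn_eq_zero_of_neg_lap_eq (hm : ∀ x, m x ≠ 0) (hw : ∀ x y, w x y = w y x)
    {S : Finset V} {f g : V → ℝ} {a b : ℝ}
    (hf : ∀ x ∉ S, lap m w f x = 0) (hg : ∀ x ∉ S, lap m w g x = 0)
    (hfa : ∀ x ∈ S, -lap m w f x = a * f x) (hgb : ∀ x ∈ S, -lap m w g x = b * g x)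
    (hab : a ≠ b) : iprodOn m S f g = 0 := by
  have hsum : ∀ {u u' : V → ℝ} {c : ℝ}, (∀ x ∉ S, lap m w u x = 0) →
      (∀ x ∈ S, -lap m w u x = c * u x) →
      ∑ x, -lap m w u x * u' x * m x = c * iprodOn m S u u' := fun hu hc => by
    rw [← sum_subset (subset_univ S) fun x _ hx => by rw [hu x hx]; ring,
      iprodOn, mul_sum]
    exact sum_congr rfl fun x hx => by rw [hc x hx]; ring
  have h := sum_neg_lap_mul_comm hm hw f g
  rw [hsum hf hfa, hsum hg hgb,
    show iprodOn m S g f = iprodOn m S f g from sum_congr rfl fun x _ => by ring] at h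
  have h' : (a - b) * iprodOn m S f g = 0 := by linear_combination h
  exact (mul_eq_zero.1 h').resolve_left (sub_ne_zero.2 hab)

theorem sum_mul_eq_zero_of_neg_lap_eq (hm : ∀ x, m x ≠ 0) (hw : ∀ x y, w x y = w y x)
    {S : Finset V} {f : V → ℝ} {a : ℝ} (hf : ∀ x ∉ S, lap m w f x = 0)
    (hfa : ∀ x ∈ S, -lap m w f x = a * f x) (ha : a ≠ 0) : ∑ x ∈ S, f x * m x = 0 := by
  have h := iprodOn_eq_zero_of_neg_lap_eq hm hw (g := fun _ => 1) (b := 0) hf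
    (fun x _ => lap_const 1 x) hfa (fun x _ => by simp [lap_const]) ha
  simpa [iprodOn] using h

theorem exists_eq_zero_of_orthonormal (hm : ∀ x, 0 < m x) (hw : ∀ x y, w x y = w y x)
    {S : Finset V} (hS : S.Nonempty) {κ : Type*} [Fintype κ] [DecidableEq κ]
    (hκ : Fintype.card κ = S.card) {e : κ → V → ℝ} {μ : κ → ℝ}
    (harm : ∀ k, ∀ x ∉ S, lap m w (e k) x = 0)
    (heig : ∀ k, ∀ x ∈ S, -lap m w (e k) x = μ k * e k x)
    (he : ∀ k k', iprodOn m S (e k) (e k') = if k = k' then 1 else 0) : ∃ k, μ k = 0 := by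
  -- the constant `1` is an eigenfunction for `0`
  have h := card_le_card_filter_of_orthonormal (fun x _ => (hm x).le) he hκ μ 0
    (ι := Unit) (g := fun _ _ => 1) Subsingleton.pairwise
    (fun _ => by simpa [iprodOn] using (sum_pos (fun x _ => hm x) hS).ne')
    fun _ k hk => by
      simpa [iprodOn] using sum_mul_eq_zero_of_neg_lap_eq (fun x => (hm x).ne') hw (harm k)
        (heig k) hk
  obtain ⟨k, hk⟩ := card_pos.1 (by simpa using h)
  exact ⟨k, by simpa using hk⟩

theorem iprodOn_univ_indicator (S : Finset V) (f g : V → ℝ) :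
    iprodOn m univ ((S : Set V).indicator f) ((S : Set V).indicator g)
      = iprodOn m S f g := by
  rw [iprodOn, iprodOn, ← sum_subset (subset_univ S) fun x _ hx => by
    rw [Set.indicator_of_notMem (by simpa using hx), zero_mul, zero_mul]]
  exact sum_congr rfl fun x hx => by
    rw [Set.indicator_of_mem (by simpa using hx), Set.indicator_of_mem (by simpa using hx)]

theorem IsLapSpectrum.nonneg {G : SimpleGraph V} {μ : Fin (Fintype.card V) → ℝ}
    (hμ : IsLapSpectrum m w μ) (hW : IsWeight G m w) (k : Fin (Fintype.card V)) : 0 ≤ μ k := by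
  obtain ⟨-, v, heig, horth⟩ := hμ
  have h := energy_eq_of_neg_lap_eq (fun x => (hW.1 x).ne') hW.2.1 (heig k)
  rw [horth, if_pos rfl, mul_one] at h
  rw [← h]
  exact mul_nonneg (by norm_num) (sum_nonneg fun x _ => sum_nonneg fun y _ =>
    mul_nonneg (sq_nonneg _) (hW.weight_nonneg x y))

theorem IsLapSpectrum.eq_zero {G : SimpleGraph V} {μ : Fin (Fintype.card V) → ℝ}
    (hμ : IsLapSpectrum m w μ) (hW : IsWeight G m w) (h0 : 0 < Fintype.card V) :
    μ ⟨0, h0⟩ = 0 := by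
  have hnn := hμ.nonneg hW
  obtain ⟨hmono, v, heig, horth⟩ := hμ
  have : Nonempty V := Fintype.card_pos_iff.1 h0
  obtain ⟨k, hk⟩ := exists_eq_zero_of_orthonormal hW.1 hW.2.1 univ_nonempty
    (Fintype.card_fin _) (fun k x hx => absurd (mem_univ x) hx) (fun k x _ => heig k x)
    horth
  exact le_antisymm (hk ▸ hmono (Fin.mk_le_of_le_val (Nat.zero_le k))) (hnn _)

theorem IsLapSpectrum.ne_zero {G : SimpleGraph V} {μ : Fin (Fintype.card V) → ℝ}
    (hμ : IsLapSpectrum m w μ) (hW : IsWeight G m w) (hG : G.Connected)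
    {k : Fin (Fintype.card V)} (hk : k.val ≠ 0) : μ k ≠ 0 := by
  intro hk0
  have h0 := hμ.eq_zero hW k.pos
  obtain ⟨-, v, heig, horth⟩ := hμ
  have : Nonempty V := Fintype.card_pos_iff.1 k.pos
  obtain ⟨x₀⟩ := this
  have hconst : ∀ j, μ j = 0 → ∀ x ∈ univ, v j x = v j x₀ := fun j hj x _ => by
    have h := energy_eq_of_neg_lap_eq (fun x => (hW.1 x).ne') hW.2.1 (heig j)
    rw [hj, zero_mul] at h
    exact hW.eq_of_energy_eq_zero hG (by linarith) x x₀
  exact hk (congrArg Fin.val (eq_of_orthonormal_of_const horth (hconst k hk0) (hconst _ h0)))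

variable [DecidableEq V] {B : Finset V} {ρ : V → ℝ}

theorem neg_lap_eq_of_mem_boundary {x : V} (hm : m x ≠ 0) (hx : x ∈ B)
    (hBB : ∀ x ∈ B, ∀ y ∈ B, w x y = 0)
    (hsplit : ∀ x ∈ B, ∀ y, y ∉ B → w x y = ρ y * m x * m y) (u : V → ℝ) :
    -lap m w u x = u x * ∑ y ∈ Bᶜ, ρ y * m y - ∑ y ∈ Bᶜ, u y * (ρ y * m y) := by
  have h := neg_lap_mul_eq_sum (w := w) hm u
  rw [← sum_add_sum_compl B, sum_eq_zero fun y hy => by rw [hBB x hx y hy, mul_zero],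
    zero_add, sum_congr rfl fun y hy => by rw [hsplit x hx y (mem_compl.1 hy)]] at h
  apply mul_right_cancel₀ hm
  rw [h, mul_sum, ← sum_sub_distrib, sum_mul]
  exact sum_congr rfl fun y _ => by ring

theorem eq_on_boundary_of_neg_lap_eq_mul (hm : ∀ x, m x ≠ 0)
    (hBB : ∀ x ∈ B, ∀ y ∈ B, w x y = 0)
    (hsplit : ∀ x ∈ B, ∀ y, y ∉ B → w x y = ρ y * m x * m y) {f : V → ℝ} {a : ℝ}
    (hf : ∀ x ∈ B, -lap m w f x = a * f x) (ha : a ≠ ∑ y ∈ Bᶜ, ρ y * m y) {x : V} (hx : x ∈ B) :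
    f x = (∑ y ∈ Bᶜ, f y * (ρ y * m y)) / (∑ y ∈ Bᶜ, ρ y * m y - a) := by
  have h := hf x hx
  rw [neg_lap_eq_of_mem_boundary (hm x) hx hBB hsplit] at h
  rw [eq_div_iff (sub_ne_zero.2 ha.symm)]
  linarith

theorem neg_lap_indicator (hm : ∀ x, m x ≠ 0) (hw : ∀ x y, w x y = w y x)
    (hBB : ∀ x ∈ B, ∀ y ∈ B, w x y = 0)
    (hsplit : ∀ x ∈ B, ∀ y, y ∉ B → w x y = ρ y * m x * m y) {f : V → ℝ}
    (hf : ∑ x ∈ B, f x * m x = 0) (x : V) :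
    -lap m w ((B : Set V).indicator f) x = (∑ y ∈ Bᶜ, ρ y * m y) * (B : Set V).indicator f x := by
  have hoff : ∀ y ∉ B, (B : Set V).indicator f y = 0 := fun y hy =>
    Set.indicator_of_notMem (by simpa using hy) f
  by_cases hx : x ∈ B
  · rw [neg_lap_eq_of_mem_boundary (hm x) hx hBB hsplit,
      sum_eq_zero (s := Bᶜ) (f := fun y => (B : Set V).indicator f y * (ρ y * m y))
        fun y hy => by rw [hoff y (mem_compl.1 hy), zero_mul]]
    ring
  · apply mul_right_cancel₀ (hm x)
    rw [neg_lap_mul_eq_sum (hm x), hoff x hx, ← sum_add_sum_compl B,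
      sum_eq_zero (s := Bᶜ) fun y hy => by rw [hoff y (mem_compl.1 hy), sub_zero,
        zero_mul]]
    calc ∑ y ∈ B, (0 - (B : Set V).indicator f y) * w x y + 0
        = -(ρ x * m x * ∑ y ∈ B, f y * m y) := by
          rw [add_zero, mul_sum, ← sum_neg_distrib]
          refine sum_congr rfl fun y hy => ?_
          rw [Set.indicator_of_mem (by simpa using hy), hw, hsplit y hy x hx]
          ring
      _ = _ := by rw [hf]; ring

theorem energy_eq_of_eq_on_boundary (hw : ∀ x y, w x y = w y x)
    (hBB : ∀ x ∈ B, ∀ y ∈ B, w x y = 0)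
    (hsplit : ∀ x ∈ B, ∀ y, y ∉ B → w x y = ρ y * m x * m y) {v : V → ℝ} {a : ℝ}
    (hva : ∀ x ∈ B, v x = a) :
    ∑ x, ∑ y, (v y - v x) ^ 2 * w x y
      = 2 * ((∑ x ∈ B, m x) * ∑ y ∈ Bᶜ, (v y - a) ^ 2 * (ρ y * m y))
        + ∑ x ∈ Bᶜ, ∑ y ∈ Bᶜ, (v y - v x) ^ 2 * w x y := by
  have hout : ∀ x ∈ B, ∑ y, (v y - v x) ^ 2 * w x y
      = m x * ∑ y ∈ Bᶜ, (v y - a) ^ 2 * (ρ y * m y) := fun x hx => by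
    rw [← sum_add_sum_compl B,
      sum_eq_zero fun y hy => by rw [hBB x hx y hy, mul_zero], zero_add, mul_sum]
    exact sum_congr rfl fun y hy => by
      rw [hsplit x hx y (mem_compl.1 hy), hva x hx]; ring
  have hin : ∀ x ∈ Bᶜ, ∑ y ∈ B, (v y - v x) ^ 2 * w x y
      = (∑ y ∈ B, m y) * ((v x - a) ^ 2 * (ρ x * m x)) := fun x hx => by
    rw [sum_mul]
    exact sum_congr rfl fun y hy => by
      rw [hw, hsplit y hy x (mem_compl.1 hx), hva y hy]; ring
  rw [← sum_add_sum_compl B, sum_congr rfl hout, ← sum_mul,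
    sum_congr rfl fun x _ => (sum_add_sum_compl B _).symm, sum_add_distrib,
    sum_congr rfl hin, ← mul_sum]
  ring

theorem mul_sum_sq_le_energy (hm : ∀ x, 0 < m x) (hw : ∀ x y, w x y = w y x)
    (hBB : ∀ x ∈ B, ∀ y ∈ B, w x y = 0)
    (hsplit : ∀ x ∈ B, ∀ y, y ∉ B → w x y = ρ y * m x * m y)
    (hne : (Bᶜ : Finset V).Nonempty) (hD : 0 < ∑ y ∈ Bᶜ, ρ y * m y)
    (hmu2 : Mu2LB m w Bᶜ
      ((∑ y ∈ Bᶜ, ρ y * m y) - (∑ x ∈ B, m x) * ((Bᶜ : Finset V).inf' hne ρ)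
        + (((∑ x ∈ B, m x) + ∑ y ∈ Bᶜ, m y) / (∑ y ∈ Bᶜ, ρ y * m y))
            * (∑ y ∈ Bᶜ, ρ y ^ 2 * m y)))
    {v : V → ℝ} {a : ℝ} (hva : ∀ x ∈ B, v x = a) (hv : ∑ x, v x * m x = 0) :
    (∑ y ∈ Bᶜ, ρ y * m y) * ∑ x, v x ^ 2 * m x
      ≤ (1 / 2) * ∑ x, ∑ y, (v y - v x) ^ 2 * w x y := by
  rw [energy_eq_of_eq_on_boundary hw hBB hsplit hva]
  set D := ∑ y ∈ Bᶜ, ρ y * m y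
  set VB := ∑ x ∈ B, m x
  set VΩ := ∑ y ∈ Bᶜ, m y
  set r := (Bᶜ : Finset V).inf' hne ρ
  set D₂ := ∑ y ∈ Bᶜ, ρ y ^ 2 * m y
  have hVB : 0 ≤ VB := sum_nonneg fun x _ => (hm x).le
  have hVΩ : 0 < VΩ := sum_pos (fun x _ => hm x) hne
  -- `c` is the mean of `v` over `Ω`
  obtain ⟨c, hc⟩ : ∃ c, ∑ y ∈ Bᶜ, v y * m y = c * VΩ := ⟨_, (div_mul_cancel₀ _ hVΩ.ne').symm⟩
  have hmean : a * VB + c * VΩ = 0 := by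
    rw [← hv, ← sum_add_sum_compl B, hc, mul_sum]
    congr 1
    exact sum_congr rfl fun x hx => by rw [hva x hx]
  set K := ∑ y ∈ Bᶜ, (v y - c) ^ 2 * m y
  set P := ∑ y ∈ Bᶜ, (v y - c) * (ρ y * m y)
  set Q := ∑ y ∈ Bᶜ, (v y - c) ^ 2 * (ρ y * m y)
  have hnorm : ∑ x, v x ^ 2 * m x = a ^ 2 * VB + (K + c ^ 2 * VΩ) := by
    rw [← sum_add_sum_compl B, sum_sq_mul_eq_of_sum_mul_eq hc]
    congr 1
    exact (sum_congr rfl fun x hx => by rw [hva x hx]).trans (mul_sum _ _ _).symm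
  have hcross : ∑ y ∈ Bᶜ, (v y - a) ^ 2 * (ρ y * m y) = Q + 2 * (c - a) * P + (c - a) ^ 2 * D := by
    simp only [Q, P, D, mul_sum, ← sum_add_distrib]
    exact sum_congr rfl fun y _ => by ring
  have hQ : r * K ≤ Q := by
    rw [mul_sum]
    refine sum_le_sum fun y hy => ?_
    have := mul_le_mul_of_nonneg_right (inf'_le ρ hy) (mul_nonneg (sq_nonneg (v y - c)) (hm y).le)
    linarith
  have hgap : (D - VB * r + (VB + VΩ) / D * D₂) * K
      ≤ (1 / 2) * ∑ x ∈ Bᶜ, ∑ y ∈ Bᶜ, (v y - v x) ^ 2 * w x y := by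
    have h := hmu2 (fun y => v y - c) (by
      simp only [sub_mul, sum_sub_distrib, ← mul_sum, hc]; ring)
    simpa only [sub_sub_sub_cancel_right] using h
  have hamgm : -(2 * c * P) ≤ D * c ^ 2 + D₂ * K / D :=
    neg_two_mul_le_of_sq_le_mul hD <| sum_sq_le_sum_mul_sum_of_sq_le_mul _
      (fun y _ => mul_nonneg (sq_nonneg _) (hm y).le)
      (fun y _ => mul_nonneg (sq_nonneg _) (hm y).le)
      fun y _ => le_of_eq (by ring)
  rw [hnorm, hcross]
  have hdiff : VB * (Q + 2 * (c - a) * P + (c - a) ^ 2 * D) + (D - VB * r + (VB + VΩ) / D * D₂) * K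
      - D * (a ^ 2 * VB + (K + c ^ 2 * VΩ))
      = VB * (Q - r * K) + (VB + VΩ) * (2 * c * P + D * c ^ 2 + D₂ * K / D)
        - 2 * (P + D * c) * (a * VB + c * VΩ) := by
    ring
  rw [hmean, mul_zero, sub_zero] at hdiff
  have := mul_nonneg hVB (sub_nonneg.2 hQ)
  have := mul_nonneg (add_pos_of_nonneg_of_pos hVB hVΩ).le
    (by linarith : 0 ≤ 2 * c * P + D * c ^ 2 + D₂ * K / D)
  linarith

theorem sum_mul_pos_of_isBoundary {G : SimpleGraph V} (hW : IsWeight G m w)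
    (hB : IsBoundary G B) (hρ : ∀ y, y ∉ B → 0 ≤ ρ y)
    (hsplit : ∀ x ∈ B, ∀ y, y ∉ B → w x y = ρ y * m x * m y) (hBne : B.Nonempty) :
    0 < ∑ y ∈ Bᶜ, ρ y * m y := by
  obtain ⟨x, hx⟩ := hBne
  obtain ⟨y, hy, hxy⟩ := hB.2 x hx
  have hpos := hW.2.2.1 x y hxy
  rw [hsplit x hx y hy] at hpos
  refine sum_pos' (fun z hz => mul_nonneg (hρ z (mem_compl.1 hz)) (hW.1 z).le)
    ⟨y, mem_compl.2 hy, ?_⟩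
  have hρy : 0 < ρ y := pos_of_mul_pos_left (pos_of_mul_pos_left hpos (hW.1 y).le) (hW.1 x).le
  exact mul_pos hρy (hW.1 y)

theorem IsSteklovSpectrum.eq_ite {σ : Fin B.card → ℝ} (hσ : IsSteklovSpectrum m w B σ)
    (hm : ∀ x, 0 < m x) (hw : ∀ x y, w x y = w y x) (hBB : ∀ x ∈ B, ∀ y ∈ B, w x y = 0)
    (hsplit : ∀ x ∈ B, ∀ y, y ∉ B → w x y = ρ y * m x * m y)
    (hD : 0 < ∑ y ∈ Bᶜ, ρ y * m y) (j : Fin B.card) :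
    σ j = if j.val = 0 then 0 else ∑ y ∈ Bᶜ, ρ y * m y := by
  obtain ⟨hmono, u, harm, heig, horth⟩ := hσ
  obtain ⟨j₀, hj₀⟩ := exists_eq_zero_of_orthonormal hm hw (card_pos.1 j.pos)
    (Fintype.card_fin _) harm heig horth
  -- an eigenfunction whose eigenvalue is not `Deg` is constant on `B`, and at most one is
  have hD_of_ne : ∀ k, k ≠ j₀ → σ k = ∑ y ∈ Bᶜ, ρ y * m y := fun k hk => by
    by_contra h
    have hconst := fun {k} (hk : σ k ≠ ∑ y ∈ Bᶜ, ρ y * m y) x (hx : x ∈ B) =>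
      eq_on_boundary_of_neg_lap_eq_mul (fun x => (hm x).ne') hBB hsplit (heig k) hk hx
    exact hk (eq_of_orthonormal_of_const horth (hconst h) (hconst (hj₀ ▸ hD.ne)))
  have hj₀0 : j₀.val = 0 := by
    by_contra h
    have h0 := hmono (Fin.mk_le_of_le_val (Nat.zero_le j₀) : (⟨0, j.pos⟩ : Fin B.card) ≤ j₀)
    rw [hj₀, hD_of_ne _ fun h' => h (by rw [← h'])] at h0
    linarith
  split_ifs with hj
  · rwa [Fin.ext (hj.trans hj₀0.symm)]
  · exact hD_of_ne j fun h => hj (h ▸ hj₀0)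

theorem IsLapSpectrum.sum_mul_le_of_val_ne_zero {G : SimpleGraph V}
    {μ : Fin (Fintype.card V) → ℝ} (hμ : IsLapSpectrum m w μ) (hW : IsWeight G m w)
    (hG : G.Connected) (hBB : ∀ x ∈ B, ∀ y ∈ B, w x y = 0)
    (hsplit : ∀ x ∈ B, ∀ y, y ∉ B → w x y = ρ y * m x * m y)
    (hne : (Bᶜ : Finset V).Nonempty) (hD : 0 < ∑ y ∈ Bᶜ, ρ y * m y)
    (hmu2 : Mu2LB m w Bᶜ
      ((∑ y ∈ Bᶜ, ρ y * m y) - (∑ x ∈ B, m x) * ((Bᶜ : Finset V).inf' hne ρ)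
        + (((∑ x ∈ B, m x) + ∑ y ∈ Bᶜ, m y) / (∑ y ∈ Bᶜ, ρ y * m y))
            * (∑ y ∈ Bᶜ, ρ y ^ 2 * m y)))
    {k : Fin (Fintype.card V)} (hk : k.val ≠ 0) : ∑ y ∈ Bᶜ, ρ y * m y ≤ μ k := by
  by_cases hkD : μ k = ∑ y ∈ Bᶜ, ρ y * m y
  · exact hkD.ge
  have hk0 := hμ.ne_zero hW hG hk
  obtain ⟨-, v, heig, horth⟩ := hμ
  have hm : ∀ x, m x ≠ 0 := fun x => (hW.1 x).ne'
  have hv := sum_mul_eq_zero_of_neg_lap_eq hm hW.2.1 (S := univ)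
    (fun x hx => absurd (mem_univ x) hx) (fun x _ => heig k x) hk0
  have h := mul_sum_sq_le_energy hW.1 hW.2.1 hBB hsplit hne hD hmu2
    (fun x hx => eq_on_boundary_of_neg_lap_eq_mul hm hBB hsplit (fun x _ => heig k x) hkD hx) hv
  have hnorm : ∑ x, v k x ^ 2 * m x = 1 := by simpa [iprod, sq] using horth k k
  rwa [hnorm, mul_one, energy_eq_of_neg_lap_eq hm hW.2.1 (heig k), horth, if_pos rfl,
    mul_one] at h

theorem IsLapSpectrum.le_sum_mul_of_val_lt_card {G : SimpleGraph V}
    {μ : Fin (Fintype.card V) → ℝ} (hμ : IsLapSpectrum m w μ) {σ : Fin B.card → ℝ}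
    (hσ : IsSteklovSpectrum m w B σ)
    (hW : IsWeight G m w) (hBB : ∀ x ∈ B, ∀ y ∈ B, w x y = 0)
    (hsplit : ∀ x ∈ B, ∀ y, y ∉ B → w x y = ρ y * m x * m y)
    (hD : 0 < ∑ y ∈ Bᶜ, ρ y * m y) {k : Fin (Fintype.card V)} (hk : k.val < B.card) :
    μ k ≤ ∑ y ∈ Bᶜ, ρ y * m y := by
  have hσD := hσ.eq_ite hW.1 hW.2.1 hBB hsplit hD
  have hμ0 := hμ.eq_zero hW k.pos
  obtain ⟨hmono, v, heig, horth⟩ := hμ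
  obtain ⟨-, u, harm, heigu, horthu⟩ := hσ
  have hm : ∀ x, m x ≠ 0 := fun x => (hW.1 x).ne'
  -- the Steklov eigenfunctions for `σ_j = Deg`, extended by zero, are Laplacian eigenfunctions
  let g : Fin (B.card - 1) → V → ℝ := fun j => (B : Set V).indicator (u ⟨j + 1, by omega⟩)
  have hg : ∀ j x, -lap m w (g j) x = (∑ y ∈ Bᶜ, ρ y * m y) * g j x := fun j =>
    neg_lap_indicator hm hW.2.1 hBB hsplit <| sum_mul_eq_zero_of_neg_lap_eq hm hW.2.1 (harm _)
      (heigu _) (by rw [hσD, if_neg (Nat.succ_ne_zero _)]; exact hD.ne')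
  have hgg : ∀ j j', iprodOn m univ (g j) (g j') = if j = j' then 1 else 0 := by
    intro j j'
    simp [g, iprodOn_univ_indicator, horthu, Fin.ext_iff]
  have hcount := card_le_card_filter_of_orthonormal (S := univ) (fun x _ => (hW.1 x).le)
    horth (by simp) μ _ (g := g) (fun j j' h => (hgg j j').trans (if_neg h))
    (fun j => by rw [hgg, if_pos rfl]; exact one_ne_zero)
    fun j k' hk' => iprodOn_eq_zero_of_neg_lap_eq hm hW.2.1 (by simp) (by simp)
      (fun x _ => hg j x) (fun x _ => heig k' x) (Ne.symm hk')
  rw [Fintype.card_fin] at hcount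
  set D := ∑ y ∈ Bᶜ, ρ y * m y
  have h0 : (⟨0, k.pos⟩ : Fin _) ∉ ({j | μ j = D} : Finset _) := by
    simp [hμ0, hD.ne]
  have hle : #(insert ⟨0, k.pos⟩ ({j | μ j = D} : Finset _)) ≤ #{j | μ j ≤ D} := by
    refine card_le_card fun j hj => ?_
    simp only [mem_insert, mem_filter, mem_univ, true_and] at hj ⊢
    rcases hj with rfl | hj
    · exact hμ0 ▸ hD.le
    · exact hj.le
  rw [card_insert_of_notMem h0] at hle
  exact hmono.le_of_lt_card_filter_le (by omega)

/-- If `w_{xy} = ρ_y m_x m_y` for all `x ∈ B`, `y ∈ Ω` with `ρ ≥ 0` on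
`Ω = V \ B`, and the second Laplacian eigenvalue of the induced weighted graph on `Ω`
satisfies `μ₂(Ω) ≥ Deg - V_B ρ_min + (V_G/Deg)⟨ρ,ρ⟩_Ω`, then `σ_i = μ_i` for all
`i = 1,…,|B|`. -/
theorem sufficient_condition_for_equality
    {V : Type*} [Fintype V] [DecidableEq V]
    (G : SimpleGraph V) (m : V → ℝ) (w : V → V → ℝ) (B : Finset V)
    (hG : G.Connected) (hW : IsWeight G m w) (hB : IsBoundary G B)
    (μ : Fin (Fintype.card V) → ℝ) (hμ : IsLapSpectrum m w μ)
    (σ : Fin B.card → ℝ) (hσ : IsSteklovSpectrum m w B σ)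
    (ρ : V → ℝ) (hρ : ∀ y, y ∉ B → 0 ≤ ρ y)
    (hsplit : ∀ x ∈ B, ∀ y, y ∉ B → w x y = ρ y * m x * m y)
    (hne : (Bᶜ : Finset V).Nonempty)
    (hmu2 : Mu2LB m w Bᶜ
      ((∑ y ∈ Bᶜ, ρ y * m y) - (∑ x ∈ B, m x) * ((Bᶜ : Finset V).inf' hne ρ)
        + (((∑ x ∈ B, m x) + ∑ y ∈ Bᶜ, m y) / (∑ y ∈ Bᶜ, ρ y * m y))
            * (∑ y ∈ Bᶜ, ρ y ^ 2 * m y))) :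
    ∀ i : Fin B.card, σ i = μ (Fin.castLE (Finset.card_le_univ B) i) := by
  intro i
  have hBB := hB.weight_eq_zero hW
  have hD := sum_mul_pos_of_isBoundary hW hB hρ hsplit (card_pos.1 i.pos)
  rw [hσ.eq_ite hW.1 hW.2.1 hBB hsplit hD i]
  split_ifs with hi
  · have hcast : Fin.castLE (Finset.card_le_univ B) i
        = ⟨0, i.pos.trans_le (Finset.card_le_univ B)⟩ := Fin.ext hi
    rw [hcast, hμ.eq_zero hW]
  · exact le_antisymm (hμ.sum_mul_le_of_val_ne_zero hW hG hBB hsplit hne hD hmu2 hi)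
      (hμ.le_sum_mul_of_val_lt_card hσ hW hBB hsplit hD i.isLt)

end GraphSteklov
end
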